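/- As formal power series, (−q;q²)∞⁴ + (q;q²)∞⁴ = 2·φ(q²)²/(q²;q²)∞², where φ(q)=∑_{n∈ℤ} q^{n²}. -/

import Mathlib

/-! Gauss's product `φ(q) = (−q;q²)∞² (q²;q²)∞` and its image `φ(−q) = (q;q²)∞² (q²;q²)∞` under
`q ↦ −q` reduce the theorem to `φ(q)² + φ(−q)² = 2 φ(q²)²`.

Gauss's product is the `z = 1` case of the finite Jacobi triple product
`∏_{j<n} (1 + z q^{2j+1})(1 + z⁻¹ q^{2j+1}) = ∑_{|k| ≤ n} [2n, n+k]_{q²} q^{k²} z^k`: after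
multiplication by `(q²;q²)_n`, the term of index `k` becomes a product of two `q`-Pochhammer symbols
times `q^{k²}`, which is `q^{k²}` modulo `q^{2n+1}`.

Comparing coefficients of `q^N`, the last identity says that `N = x² + y²` has as many solutions as
`N = 2u² + 2v²` when `N` is even (via `(x, y) = (u + v, u − v)`), and that the latter has none when
`N` is odd. -/

open PowerSeries Finset

/-- `(q^a; q^a)_∞ = ∏_{j ≥ 1} (1 - q^{a j})` as a formal power series over ℤ:
the coefficient of `q^N` is computed from the (sufficient) finite partial product. -/
noncomputable def E (a : ℕ) : PowerSeries ℤ :=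
  PowerSeries.mk fun N =>
    (∏ j ∈ Finset.range (N + 1), (1 - Polynomial.X ^ (a * (j + 1)) : Polynomial ℤ)).coeff N

/-- `(q; q²)_∞ = ∏_{j ≥ 0} (1 - q^{2j+1})`. -/
noncomputable def Eodd : PowerSeries ℤ :=
  PowerSeries.mk fun N =>
    (∏ j ∈ Finset.range (N + 1), (1 - Polynomial.X ^ (2 * j + 1) : Polynomial ℤ)).coeff N

/-- `(-q; q²)_∞ = ∏_{j ≥ 0} (1 + q^{2j+1})`. -/
noncomputable def EoddNeg : PowerSeries ℤ :=
  PowerSeries.mk fun N =>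
    (∏ j ∈ Finset.range (N + 1), (1 + Polynomial.X ^ (2 * j + 1) : Polynomial ℤ)).coeff N

/-- Ramanujan's theta function `φ(q^a) = ∑_{m ∈ ℤ} q^{a m²}`. -/
noncomputable def phi (a : ℕ) : PowerSeries ℤ :=
  PowerSeries.mk fun N => (Nat.card {m : ℤ // a * m ^ 2 = N} : ℤ)

/-- Ramanujan's theta function `ψ(q^a) = ∑_{k ≥ 0} q^{a k(k+1)/2}`. -/
noncomputable def psi (a : ℕ) : PowerSeries ℤ :=
  PowerSeries.mk fun N => (Nat.card {k : ℕ // a * (k * (k + 1) / 2) = N} : ℤ)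

section QAnalogues

variable {R : Type*} [CommRing R]

def qPochhammer (a q : R) (n : ℕ) : R := ∏ j ∈ range n, (1 - a * q ^ j)

lemma qPochhammer_succ (a q : R) (n : ℕ) :
    qPochhammer a q (n + 1) = qPochhammer a q n * (1 - a * q ^ n) :=
  prod_range_succ _ _

lemma qPochhammer_succ' (a q : R) (n : ℕ) :
    qPochhammer a q (n + 1) = (1 - a) * qPochhammer (a * q) q n := by
  rw [qPochhammer, prod_range_succ', qPochhammer, mul_comm]
  simp only [pow_succ', pow_zero, mul_one, mul_assoc]

lemma qPochhammer_add (a q : R) (m n : ℕ) :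
    qPochhammer a q (m + n) = qPochhammer a q m * qPochhammer (a * q ^ m) q n := by
  simp only [qPochhammer, prod_range_add, pow_add, mul_assoc]

lemma dvd_prod_sub_one {ι : Type*} {d : R} {s : Finset ι} {f : ι → R}
    (h : ∀ i ∈ s, d ∣ f i - 1) : d ∣ ∏ i ∈ s, f i - 1 :=
  prod_induction f (fun x => d ∣ x - 1) (fun x y hx hy => by simpa using dvd_mul_sub_mul hx hy)
    (by simp) h

lemma dvd_qPochhammer_sub_one (a q : R) (n : ℕ) : a ∣ qPochhammer a q n - 1 :=
  dvd_prod_sub_one fun j _ => ⟨-q ^ j, by ring⟩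

variable (q : R)

def qBinomial : ℕ → ℕ → R
  | _, 0 => 1
  | 0, _ + 1 => 0
  | n + 1, k + 1 => q ^ (k + 1) * qBinomial n (k + 1) + qBinomial n k

@[simp]
lemma qBinomial_zero_right (n : ℕ) : qBinomial q n 0 = 1 := by
  cases n <;> rfl

@[simp]
lemma qBinomial_zero_succ (k : ℕ) : qBinomial q 0 (k + 1) = 0 :=
  rfl

lemma qBinomial_succ_succ (n k : ℕ) :
    qBinomial q (n + 1) (k + 1) = q ^ (k + 1) * qBinomial q n (k + 1) + qBinomial q n k :=
  rfl

lemma qBinomial_eq_zero_of_lt : ∀ {n k : ℕ}, n < k → qBinomial q n k = 0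
  | 0, _ + 1, _ => rfl
  | n + 1, k + 1, h => by
    rw [qBinomial_succ_succ, qBinomial_eq_zero_of_lt (by omega),
      qBinomial_eq_zero_of_lt (by omega : n < k), mul_zero, add_zero]

@[simp]
lemma qBinomial_self : ∀ n : ℕ, qBinomial q n n = 1
  | 0 => rfl
  | n + 1 => by
    rw [qBinomial_succ_succ, qBinomial_eq_zero_of_lt q (by omega), qBinomial_self n]
    ring

lemma qBinomial_succ_succ' (n k : ℕ) :
    qBinomial q (n + 1) (k + 1) = qBinomial q n (k + 1) + q ^ (n - k) * qBinomial q n k := by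
  induction n generalizing k with
  | zero => cases k <;> simp [qBinomial_succ_succ]
  | succ n ih =>
    rcases k with _ | k
    · have h := ih 0
      simp only [qBinomial_succ_succ, qBinomial_zero_right, Nat.sub_zero] at h ⊢
      linear_combination q * h
    obtain ⟨j, rfl⟩ | hnk : (∃ j, n = k + 1 + j) ∨ n ≤ k := by
      rcases le_or_gt n k with h | h
      · exact .inr h
      · exact .inl ⟨n - (k + 1), by omega⟩
    · have h₁ := ih (k + 1)
      have h₀ := ih k
      rw [show k + 1 + j - (k + 1) = j by omega] at h₁
      rw [show k + 1 + j - k = j + 1 by omega] at h₀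
      rw [show k + 1 + j + 1 - (k + 1) = j + 1 by omega]
      linear_combination qBinomial_succ_succ q (k + 1 + j + 1) (k + 1)
        - qBinomial_succ_succ q (k + 1 + j) (k + 1)
        - q ^ (j + 1) * qBinomial_succ_succ q (k + 1 + j) k + q ^ (k + 2) * h₁ + h₀
    · rcases hnk.eq_or_lt with rfl | hlt
      · simp [qBinomial_eq_zero_of_lt q (Nat.lt_succ_self _)]
      · rw [qBinomial_eq_zero_of_lt q (by omega), qBinomial_eq_zero_of_lt q (by omega),
          qBinomial_eq_zero_of_lt q (by omega : n + 1 < k + 1)]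
        ring

lemma qBinomial_add_right_mul_qPochhammer (n k : ℕ) :
    qBinomial q (n + k) k * qPochhammer q q k = qPochhammer (q ^ (n + 1)) q k := by
  induction n generalizing k with
  | zero => simp [qPochhammer]
  | succ n ihn =>
    induction k with
    | zero => simp [qPochhammer]
    | succ k ihk =>
      have h := ihn (k + 1)
      have e := qBinomial_succ_succ q (n + 1 + k) k
      rw [show n + 1 + k = n + (k + 1) by omega] at e ihk
      rw [qPochhammer_succ q q, qPochhammer_succ' (q ^ (n + 1)), ← pow_succ] at h
      rw [show n + 1 + (k + 1) = n + (k + 1) + 1 by omega, e, qPochhammer_succ q q,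
        qPochhammer_succ (q ^ (n + 1 + 1))]
      linear_combination q ^ (k + 1) * h + (1 - q * q ^ k) * ihk

lemma qBinomial_add_left_mul_qPochhammer (a b : ℕ) :
    qBinomial q (a + b) a * qPochhammer q q b = qPochhammer (q ^ (a + 1)) q b := by
  induction a generalizing b with
  | zero => simp [qPochhammer]
  | succ a iha =>
    induction b with
    | zero => simp [qPochhammer]
    | succ b ihb =>
      have h := iha (b + 1)
      have e := qBinomial_succ_succ q (a + 1 + b) a
      rw [show a + 1 + b = a + (b + 1) by omega] at e ihb
      rw [qPochhammer_succ q q, qPochhammer_succ' (q ^ (a + 1)), ← pow_succ] at h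
      rw [show a + 1 + (b + 1) = a + (b + 1) + 1 by omega, e, qPochhammer_succ q q,
        qPochhammer_succ (q ^ (a + 1 + 1))]
      linear_combination q ^ (a + 1) * (1 - q * q ^ b) * ihb + h

lemma qBinomial_add_two_add_two (N m : ℕ) (hm : m ≤ N) :
    qBinomial q (N + 2) (m + 2) = q ^ (m + 2) * qBinomial q N (m + 2)
      + (1 + q ^ (N + 1)) * qBinomial q N (m + 1) + q ^ (N - m) * qBinomial q N m := by
  have hpow : q ^ (N - m) * q ^ (m + 1) = q ^ (N + 1) := by rw [← pow_add]; congr 1; omega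
  rw [qBinomial_succ_succ' q (N + 1) (m + 1), show N + 1 - (m + 1) = N - m by omega,
    qBinomial_succ_succ q N (m + 1), qBinomial_succ_succ q N m]
  linear_combination qBinomial q N (m + 1) * hpow

lemma qPochhammer_mul_qBinomial (k d m : ℕ) (hm : m = k ∨ m = k + 2 * d) :
    qPochhammer q q (k + d) * qBinomial q (2 * (k + d)) m
      = qPochhammer (q ^ (k + 1)) q d * qPochhammer (q ^ (k + 2 * d + 1)) q k := by
  have hB : qBinomial q (2 * (k + d)) m * qPochhammer q q k
      = qPochhammer (q ^ (k + 2 * d + 1)) q k := by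
    rcases hm with rfl | rfl
    · rw [show 2 * (m + d) = m + 2 * d + m by ring]
      exact qBinomial_add_right_mul_qPochhammer q _ _
    · rw [show 2 * (k + d) = k + 2 * d + k by ring]
      exact qBinomial_add_left_mul_qPochhammer q _ _
  rw [qPochhammer_add, ← pow_succ']
  linear_combination qPochhammer (q ^ (k + 1)) q d * hB

end QAnalogues

section FiniteJacobi

variable {R : Type*} [CommRing R] (q : R)

lemma Polynomial.coeff_mul_quadratic_zero (p : Polynomial R) (a b c : R) :
    (p * (Polynomial.C a * Polynomial.X ^ 2 + Polynomial.C b * Polynomial.X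
      + Polynomial.C c)).coeff 0
      = c * p.coeff 0 := by
  simp [mul_add, ← mul_assoc]
  ring

lemma Polynomial.coeff_mul_quadratic_one (p : Polynomial R) (a b c : R) :
    (p * (Polynomial.C a * Polynomial.X ^ 2 + Polynomial.C b * Polynomial.X
      + Polynomial.C c)).coeff 1
      = b * p.coeff 0 + c * p.coeff 1 := by
  simp [mul_add, ← mul_assoc, Polynomial.coeff_mul_X_pow']
  ring

lemma Polynomial.coeff_mul_quadratic_add_two (p : Polynomial R) (a b c : R) (m : ℕ) :
    (p * (Polynomial.C a * Polynomial.X ^ 2 + Polynomial.C b * Polynomial.X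
      + Polynomial.C c)).coeff (m + 2)
      = a * p.coeff m + b * p.coeff (m + 1) + c * p.coeff (m + 2) := by
  simp [mul_add, ← mul_assoc, Polynomial.coeff_mul_X_pow]
  ring

lemma pow_dvd_qPochhammer_mul_qBinomial_sub (n m : ℕ) (hm : m ≤ 2 * n) :
    q ^ (2 * n + 1) ∣ qPochhammer (q ^ 2) (q ^ 2) n * qBinomial (q ^ 2) (2 * n) m
        * q ^ (((m : ℤ) - n).natAbs ^ 2) - q ^ (((m : ℤ) - n).natAbs ^ 2) := by
  -- With `d = |m - n|` and `k = n - d`, the product `(q²;q²)_n [2n, m]_{q²}` is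
  -- `(q^{2k+2}; q²)_d (q^{2k+4d+2}; q²)_k ≡ 1 mod q^{2k+2}`, and `d² + 2k + 2 ≥ 2n + 1`.
  obtain ⟨k, d, rfl, hkm⟩ : ∃ k d, n = k + d ∧ (m = k ∨ m = k + 2 * d) := by
    rcases le_total m n with h | h
    · exact ⟨m, n - m, by omega, .inl rfl⟩
    · exact ⟨2 * n - m, m - n, by omega, .inr (by omega)⟩
  have hd : ((m : ℤ) - (k + d : ℕ)).natAbs = d := by omega
  rw [hd, qPochhammer_mul_qBinomial _ k d m hkm]
  have h₁ : (q ^ 2) ^ (k + 1) ∣ qPochhammer ((q ^ 2) ^ (k + 1)) (q ^ 2) d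
      * qPochhammer ((q ^ 2) ^ (k + 2 * d + 1)) (q ^ 2) k - 1 := by
    simpa using dvd_mul_sub_mul (dvd_qPochhammer_sub_one _ (q ^ 2) d)
      ((pow_dvd_pow (q ^ 2) (by omega : k + 1 ≤ k + 2 * d + 1)).trans
        (dvd_qPochhammer_sub_one _ (q ^ 2) k))
  have h₂ : q ^ (2 * (k + d) + 1) ∣ q ^ (d ^ 2) * (q ^ 2) ^ (k + 1) := by
    rw [← pow_mul, ← pow_add]
    exact pow_dvd_pow _ (by nlinarith)
  refine h₂.trans ?_
  convert mul_dvd_mul_left (q ^ (d ^ 2)) h₁ using 1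
  ring

/-- `z ^ n * ∏_{j<n} (1 + z q^{2j+1}) (1 + z⁻¹ q^{2j+1})` in the variable `z = X`: the coefficient
of `z ^ m` is the coefficient of `z ^ (m - n)` in the finite Jacobi triple product. -/
noncomputable def jacobiPoly (n : ℕ) : Polynomial R :=
  ∏ j ∈ range n, (Polynomial.X + Polynomial.C (q ^ (2 * j + 1)))
    * (1 + Polynomial.C (q ^ (2 * j + 1)) * Polynomial.X)

lemma jacobiPoly_succ (n : ℕ) :
    jacobiPoly q (n + 1) = jacobiPoly q n * (Polynomial.C (q ^ (2 * n + 1)) * Polynomial.X ^ 2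
      + Polynomial.C (1 + (q ^ 2) ^ (2 * n + 1)) * Polynomial.X
      + Polynomial.C (q ^ (2 * n + 1))) := by
  rw [jacobiPoly, prod_range_succ, ← jacobiPoly]
  simp only [map_add, map_one, ← pow_mul, map_pow]
  ring

lemma coeff_jacobiPoly_succ_add_two {n : ℕ}
    (ih : ∀ m : ℕ, (jacobiPoly q n).coeff m
      = qBinomial (q ^ 2) (2 * n) m * q ^ (((m : ℤ) - n).natAbs ^ 2)) (m : ℕ) :
    (jacobiPoly q (n + 1)).coeff (m + 2)
      = qBinomial (q ^ 2) (2 * n + 2) (m + 2)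
        * q ^ ((((m + 2 : ℕ) : ℤ) - (n + 1 : ℕ)).natAbs ^ 2) := by
  rw [jacobiPoly_succ, Polynomial.coeff_mul_quadratic_add_two, ih, ih, ih]
  rcases le_or_gt m (2 * n) with hm | hm
  · have h₂ : q ^ (2 * n + 1) * q ^ ((((m + 2 : ℕ) : ℤ) - n).natAbs ^ 2)
        = (q ^ 2) ^ (m + 2) * q ^ ((((m + 2 : ℕ) : ℤ) - (n + 1 : ℕ)).natAbs ^ 2) := by
      rw [← pow_mul, ← pow_add, ← pow_add]
      congr 1
      zify
      simp only [sq_abs]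
      ring
    have h₁ : q ^ ((((m + 1 : ℕ) : ℤ) - n).natAbs ^ 2)
        = q ^ ((((m + 2 : ℕ) : ℤ) - (n + 1 : ℕ)).natAbs ^ 2) := by
      congr 1
      zify
      simp only [sq_abs]
      ring
    have h₀ : q ^ (2 * n + 1) * q ^ (((m : ℤ) - n).natAbs ^ 2)
        = (q ^ 2) ^ (2 * n - m) * q ^ ((((m + 2 : ℕ) : ℤ) - (n + 1 : ℕ)).natAbs ^ 2) := by
      rw [← pow_mul, ← pow_add, ← pow_add]
      congr 1
      zify [hm]
      simp only [sq_abs]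
      ring
    rw [qBinomial_add_two_add_two (q ^ 2) (2 * n) m hm, h₁]
    linear_combination qBinomial (q ^ 2) (2 * n) m * h₀ + qBinomial (q ^ 2) (2 * n) (m + 2) * h₂
  · simp only [qBinomial_eq_zero_of_lt _ (by omega : 2 * n < m), qBinomial_eq_zero_of_lt _
      (by omega : 2 * n < m + 1), qBinomial_eq_zero_of_lt _ (by omega : 2 * n < m + 2),
      qBinomial_eq_zero_of_lt _ (by omega : 2 * n + 2 < m + 2)]
    ring

lemma coeff_jacobiPoly (n m : ℕ) :
    (jacobiPoly q n).coeff m = qBinomial (q ^ 2) (2 * n) m * q ^ (((m : ℤ) - n).natAbs ^ 2) := by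
  induction n generalizing m with
  | zero => cases m <;> simp [jacobiPoly, Polynomial.coeff_one]
  | succ n ih =>
    rw [show 2 * (n + 1) = 2 * n + 2 by ring]
    rcases m with _ | _ | m
    · rw [jacobiPoly_succ, Polynomial.coeff_mul_quadratic_zero, ih, qBinomial_zero_right,
        qBinomial_zero_right, one_mul, one_mul, ← pow_add]
      congr 1
      zify
      simp only [sq_abs]
      ring
    · have h₁ : q ^ (2 * n + 1) * q ^ ((((1 : ℕ) : ℤ) - n).natAbs ^ 2)
          = (q ^ 2) ^ 1 * q ^ ((((1 : ℕ) : ℤ) - (n + 1 : ℕ)).natAbs ^ 2) := by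
        rw [← pow_mul, ← pow_add, ← pow_add]
        congr 1
        zify
        simp only [sq_abs]
        ring
      have h₀ : q ^ ((((0 : ℕ) : ℤ) - n).natAbs ^ 2)
          = q ^ ((((1 : ℕ) : ℤ) - (n + 1 : ℕ)).natAbs ^ 2) := by
        congr 1
        zify
        simp only [sq_abs]
        ring
      rw [jacobiPoly_succ, Polynomial.coeff_mul_quadratic_one, ih, ih,
        qBinomial_succ_succ (q ^ 2) (2 * n + 1) 0, qBinomial_succ_succ' (q ^ 2) (2 * n) 0,
        Nat.sub_zero, qBinomial_zero_right, qBinomial_zero_right, h₀]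
      linear_combination qBinomial (q ^ 2) (2 * n) 1 * h₁
    · exact coeff_jacobiPoly_succ_add_two q ih m

lemma prod_one_add_sq_eq_sum (n : ℕ) :
    (∏ j ∈ range n, (1 + q ^ (2 * j + 1))) ^ 2
      = ∑ m ∈ range (2 * n + 1), qBinomial (q ^ 2) (2 * n) m * q ^ (((m : ℤ) - n).natAbs ^ 2) := by
  have hdeg : (jacobiPoly q n).natDegree < 2 * n + 1 :=
    Nat.lt_succ_of_le <| Polynomial.natDegree_le_iff_coeff_eq_zero.mpr fun N hN => by
      rw [coeff_jacobiPoly, qBinomial_eq_zero_of_lt _ hN, zero_mul]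
  have h := Polynomial.eval_eq_sum_range' hdeg 1
  simp only [one_pow, mul_one, coeff_jacobiPoly] at h
  rw [← h, jacobiPoly, Polynomial.eval_prod, sq, ← prod_mul_distrib]
  refine prod_congr rfl fun j _ => ?_
  simp only [Polynomial.eval_mul, Polynomial.eval_add, Polynomial.eval_X, Polynomial.eval_C,
    Polynomial.eval_one, mul_one, add_comm (1 : R)]

lemma pow_dvd_qPochhammer_mul_prod_sq_sub_sum (n : ℕ) :
    q ^ (2 * n + 1) ∣ qPochhammer (q ^ 2) (q ^ 2) n * (∏ j ∈ range n, (1 + q ^ (2 * j + 1))) ^ 2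
      - ∑ m ∈ range (2 * n + 1), q ^ (((m : ℤ) - n).natAbs ^ 2) := by
  rw [prod_one_add_sq_eq_sum, mul_sum, ← sum_sub_distrib]
  refine dvd_sum fun m hm => ?_
  rw [← mul_assoc]
  exact pow_dvd_qPochhammer_mul_qBinomial_sub q n m (by rw [mem_range] at hm; omega)

end FiniteJacobi

section Truncation

variable {R : Type*} [CommRing R]

lemma PowerSeries.eq_of_forall_X_pow_dvd_sub {f g : R⟦X⟧} (h : ∀ n, X ^ n ∣ f - g) : f = g := by
  ext n
  rw [← sub_eq_zero, ← map_sub]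
  exact X_pow_dvd_iff.mp (h (n + 1)) n n.lt_succ_self

noncomputable def infProd (u : ℕ → Polynomial R) : R⟦X⟧ :=
  mk fun N => (∏ j ∈ range (N + 1), u j).coeff N

lemma X_pow_dvd_infProd_sub {u : ℕ → Polynomial R} (hu : ∀ j, Polynomial.X ^ (j + 1) ∣ u j - 1)
    (n : ℕ) : X ^ n ∣ infProd u - ∏ j ∈ range n, (u j : R⟦X⟧) := by
  have hstable : ∀ N < n, (∏ j ∈ range n, u j).coeff N = (∏ j ∈ range (N + 1), u j).coeff N := by
    intro N hN
    have htail : Polynomial.X ^ (N + 1) ∣ ∏ j ∈ Ico (N + 1) n, u j - 1 :=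
      dvd_prod_sub_one fun j hj => (pow_dvd_pow _ (by rw [mem_Ico] at hj; omega)).trans (hu j)
    have hdvd : Polynomial.X ^ (N + 1) ∣ ∏ j ∈ range n, u j - ∏ j ∈ range (N + 1), u j := by
      have h := htail.mul_left (∏ j ∈ range (N + 1), u j)
      rwa [mul_sub, mul_one, prod_range_mul_prod_Ico u (by omega : N + 1 ≤ n)] at h
    simpa [sub_eq_zero] using Polynomial.X_pow_dvd_iff.mp hdvd N N.lt_succ_self
  refine X_pow_dvd_iff.mpr fun N hN => ?_
  have hcoe : (∏ j ∈ range n, (u j : R⟦X⟧)) = ((∏ j ∈ range n, u j : Polynomial R) : R⟦X⟧) :=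
    (map_prod Polynomial.coeToPowerSeries.ringHom _ _).symm
  rw [map_sub, infProd, coeff_mk, hcoe, Polynomial.coeff_coe, hstable N hN, sub_self]

lemma rescale_infProd (a : R) (u : ℕ → Polynomial R) :
    rescale a (infProd u) = infProd fun j => (u j).comp (Polynomial.C a * Polynomial.X) := by
  ext N
  rw [infProd, infProd, coeff_rescale, coeff_mk, coeff_mk, ← Polynomial.prod_comp,
    Polynomial.comp_C_mul_X_coeff, mul_comm]

end Truncation

section WeightGeneratingFunction

variable {R : Type*} [CommRing R] {α β : Type*}

noncomputable def weightGF (w : α → ℕ) : R⟦X⟧ :=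
  mk fun N => (Nat.card {x // w x = N} : R)

lemma weightGF_mul (v : α → ℕ) (w : β → ℕ) [∀ n, Finite {x // v x = n}]
    [∀ n, Finite {y // w y = n}] :
    (weightGF v * weightGF w : R⟦X⟧) = weightGF fun p : α × β => v p.1 + w p.2 := by
  ext N
  let e : {p : α × β // v p.1 + w p.2 = N}
      ≃ Σ ij : antidiagonal N, {x // v x = ij.1.1} × {y // w y = ij.1.2} :=
    { toFun := fun p => ⟨⟨(v p.1.1, w p.1.2), mem_antidiagonal.mpr p.2⟩, ⟨p.1.1, rfl⟩, ⟨p.1.2, rfl⟩⟩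
      invFun := fun ⟨ij, x, y⟩ => ⟨(x.1, y.1), by rw [x.2, y.2]; exact mem_antidiagonal.mp ij.2⟩
      left_inv := fun _ => rfl
      right_inv := by
        rintro ⟨⟨⟨i, j⟩, hij⟩, ⟨x, hx : v x = i⟩, ⟨y, hy : w y = j⟩⟩
        subst hx hy
        rfl }
  rw [weightGF, weightGF, weightGF, coeff_mk, coeff_mul, Nat.card_congr e, Nat.card_sigma,
    ← sum_coe_sort (antidiagonal N)]
  simp [Nat.card_prod]

lemma X_pow_dvd_weightGF_sub_sum (w : α → ℕ) (s : Finset α) (n : ℕ)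
    (hs : ∀ x, w x < n → x ∈ s) : X ^ n ∣ (weightGF w : R⟦X⟧) - ∑ x ∈ s, X ^ w x := by
  refine X_pow_dvd_iff.mpr fun N hN => ?_
  have hcard : Nat.card {x // w x = N} = (s.filter fun x => N = w x).card := by
    rw [← Nat.card_eq_finsetCard]
    exact Nat.card_congr (Equiv.subtypeEquivRight fun x => by
      rw [mem_filter, eq_comm, iff_and_self]
      exact fun h => hs x (h ▸ hN))
  simp only [weightGF, map_sub, map_sum, coeff_mk, coeff_X_pow, hcard, sum_boole, sub_self]

end WeightGeneratingFunction

lemma finite_natAbs_sq_fiber {a : ℕ} (ha : a ≠ 0) (n : ℕ) :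
    Finite {m : ℤ // a * m.natAbs ^ 2 = n} := by
  refine Set.Finite.to_subtype ((Set.finite_Icc (-(n : ℤ)) n).subset
    fun m (hm : a * m.natAbs ^ 2 = n) => ?_)
  have : m.natAbs ≤ n :=
    calc m.natAbs ≤ m.natAbs ^ 2 := Nat.le_self_pow two_ne_zero _
      _ ≤ a * m.natAbs ^ 2 := Nat.le_mul_of_pos_left _ (Nat.pos_of_ne_zero ha)
      _ = n := hm
  exact ⟨by omega, by omega⟩

lemma phi_eq_weightGF (a : ℕ) : phi a = weightGF fun m : ℤ => a * m.natAbs ^ 2 := by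
  ext N
  rw [phi, weightGF, coeff_mk, coeff_mk]
  congr 1
  exact Nat.card_congr (Equiv.subtypeEquivRight fun m => by zify; rw [sq_abs])

lemma coeff_phi_sq {a : ℕ} (ha : a ≠ 0) (N : ℕ) :
    coeff N (phi a ^ 2) = (Nat.card {p : ℤ × ℤ // (a : ℤ) * (p.1 ^ 2 + p.2 ^ 2) = N} : ℤ) := by
  have := finite_natAbs_sq_fiber ha
  rw [phi_eq_weightGF, sq, weightGF_mul, weightGF, coeff_mk]
  congr 1
  exact Nat.card_congr (Equiv.subtypeEquivRight fun p => by
    zify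
    rw [sq_abs, sq_abs, mul_add])

lemma Int.even_sq_add_sq_iff (u v : ℤ) : Even (u ^ 2 + v ^ 2) ↔ Even (u + v) := by
  simp [Int.even_add, Int.even_pow]

lemma card_two_mul_sq_add_sq (M : ℤ) :
    Nat.card {p : ℤ × ℤ // 2 * (p.1 ^ 2 + p.2 ^ 2) = M}
      = if Even M then Nat.card {p : ℤ × ℤ // p.1 ^ 2 + p.2 ^ 2 = M} else 0 := by
  have half : ∀ {u v : ℤ}, u ^ 2 + v ^ 2 = M → Even M → u + v = 2 * ((u + v) / 2) := by
    intro u v h hM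
    obtain ⟨t, ht⟩ := (Int.even_sq_add_sq_iff u v).mp (h ▸ hM)
    omega
  let e : {p : ℤ × ℤ // 2 * (p.1 ^ 2 + p.2 ^ 2) = M}
      ≃ {p : ℤ × ℤ // p.1 ^ 2 + p.2 ^ 2 = M ∧ Even M} :=
    { toFun := fun p => ⟨(p.1.1 + p.1.2, p.1.1 - p.1.2),
        by linear_combination p.2, ⟨p.1.1 ^ 2 + p.1.2 ^ 2, by linear_combination -p.2⟩⟩
      invFun := fun p => ⟨((p.1.1 + p.1.2) / 2, p.1.1 - (p.1.1 + p.1.2) / 2),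
        by linear_combination p.2.1
          + (p.1.1 - p.1.2 - 2 * ((p.1.1 + p.1.2) / 2)) * half p.2.1 p.2.2⟩
      left_inv := fun p => by ext <;> dsimp only <;> omega
      right_inv := fun p => by
        have := half p.2.1 p.2.2
        ext <;> dsimp only <;> omega }
  rw [Nat.card_congr e]
  split_ifs with hM
  · exact Nat.card_congr (Equiv.subtypeEquivRight fun p => and_iff_left hM)
  · have : IsEmpty {p : ℤ × ℤ // p.1 ^ 2 + p.2 ^ 2 = M ∧ Even M} := ⟨fun p => hM p.2.2⟩
    exact Nat.card_of_isEmpty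

lemma phi_one_sq_add_rescale_sq : phi 1 ^ 2 + rescale (-1 : ℤ) (phi 1) ^ 2 = 2 * phi 2 ^ 2 := by
  ext N
  rw [two_mul, map_add, map_add, ← map_pow, coeff_rescale, coeff_phi_sq one_ne_zero,
    coeff_phi_sq two_ne_zero]
  push_cast
  rw [card_two_mul_sq_add_sq]
  rcases Nat.even_or_odd N with hN | hN
  · simp [hN.neg_one_pow, (Int.even_coe_nat N).mpr hN]
  · simp [hN.neg_one_pow, Int.not_even_iff_odd.mpr ((Int.odd_coe_nat N).mpr hN)]

lemma EoddNeg_eq_infProd : EoddNeg = infProd fun j => 1 + Polynomial.X ^ (2 * j + 1) := rfl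

lemma Eodd_eq_infProd : Eodd = infProd fun j => 1 - Polynomial.X ^ (2 * j + 1) := rfl

lemma E_eq_infProd (a : ℕ) : E a = infProd fun j => 1 - Polynomial.X ^ (a * (j + 1)) := rfl

lemma X_pow_dvd_EoddNeg_sub (n : ℕ) :
    X ^ n ∣ EoddNeg - ∏ j ∈ range n, (1 + X ^ (2 * j + 1) : ℤ⟦X⟧) := by
  have h := X_pow_dvd_infProd_sub (u := fun j => (1 + Polynomial.X ^ (2 * j + 1) : Polynomial ℤ))
    (fun j => by simpa using pow_dvd_pow Polynomial.X (by omega : j + 1 ≤ 2 * j + 1)) n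
  rw [EoddNeg_eq_infProd]
  convert h using 3
  simp

lemma X_pow_dvd_E_two_sub (n : ℕ) :
    X ^ n ∣ E 2 - qPochhammer (X ^ 2 : ℤ⟦X⟧) (X ^ 2) n := by
  have h := X_pow_dvd_infProd_sub (u := fun j => (1 - Polynomial.X ^ (2 * (j + 1)) : Polynomial ℤ))
    (fun j => by simpa using pow_dvd_pow Polynomial.X (by omega : j + 1 ≤ 2 * (j + 1))) n
  rw [E_eq_infProd]
  convert h using 2
  refine prod_congr rfl fun j _ => ?_
  rw [Polynomial.coe_sub, Polynomial.coe_one, Polynomial.coe_pow, Polynomial.coe_X]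
  ring

lemma X_pow_dvd_phi_one_sub (n : ℕ) :
    X ^ (n + 1) ∣ phi 1 - ∑ m ∈ range (2 * n + 1), (X : ℤ⟦X⟧) ^ (((m : ℤ) - n).natAbs ^ 2) := by
  have hinj : Set.InjOn (fun m : ℕ => (m : ℤ) - n) (range (2 * n + 1)) :=
    fun _ _ _ _ h => by simpa using h
  rw [← sum_image (f := fun k : ℤ => (X : ℤ⟦X⟧) ^ (k.natAbs ^ 2)) hinj, phi_eq_weightGF]
  simp only [one_mul]
  refine X_pow_dvd_weightGF_sub_sum (R := ℤ) _ _ _ fun k hk => ?_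
  have hk' : k.natAbs ≤ n := (Nat.le_self_pow two_ne_zero _).trans (by omega)
  exact mem_image.mpr ⟨(k + n).toNat, by rw [mem_range]; omega, by omega⟩

lemma EoddNeg_sq_mul_E_two : EoddNeg ^ 2 * E 2 = phi 1 := by
  refine PowerSeries.eq_of_forall_X_pow_dvd_sub fun n => ?_
  have hO := X_pow_dvd_EoddNeg_sub n
  have hsq : X ^ n ∣ EoddNeg ^ 2 - (∏ j ∈ range n, (1 + X ^ (2 * j + 1) : ℤ⟦X⟧)) ^ 2 := by
    rw [sq, sq]
    exact dvd_mul_sub_mul hO hO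
  have hprod := dvd_mul_sub_mul hsq (X_pow_dvd_E_two_sub n)
  have hjac := (pow_dvd_pow (X : ℤ⟦X⟧) (by omega : n ≤ 2 * n + 1)).trans
    (pow_dvd_qPochhammer_mul_prod_sq_sub_sum (X : ℤ⟦X⟧) n)
  have hphi := (pow_dvd_pow (X : ℤ⟦X⟧) (by omega : n ≤ n + 1)).trans (X_pow_dvd_phi_one_sub n)
  convert dvd_sub (dvd_add hprod hjac) hphi using 1
  ring

lemma rescale_neg_one_EoddNeg : rescale (-1 : ℤ) EoddNeg = Eodd := by
  rw [EoddNeg_eq_infProd, Eodd_eq_infProd, rescale_infProd]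
  congr
  funext j
  simp [Odd.neg_pow ⟨j, rfl⟩, sub_eq_add_neg]

lemma rescale_neg_one_E_two : rescale (-1 : ℤ) (E 2) = E 2 := by
  rw [E_eq_infProd, rescale_infProd]
  congr
  funext j
  simp [(even_two_mul (j + 1)).neg_pow]

lemma Eodd_sq_mul_E_two : Eodd ^ 2 * E 2 = rescale (-1 : ℤ) (phi 1) := by
  rw [← EoddNeg_sq_mul_E_two, map_mul, map_pow, rescale_neg_one_EoddNeg, rescale_neg_one_E_two]

/-- `(−q;q²)_∞⁴ + (q;q²)_∞⁴ = 2 φ(q²)² / (q²;q²)_∞²`, stated in multiplied-out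
form (the denominator has constant term 1, hence is a non-zero-divisor). -/
theorem sum_of_fourth_powers :
    (EoddNeg ^ 4 + Eodd ^ 4) * E 2 ^ 2 = 2 * phi 2 ^ 2 := by
  calc (EoddNeg ^ 4 + Eodd ^ 4) * E 2 ^ 2
      = (EoddNeg ^ 2 * E 2) ^ 2 + (Eodd ^ 2 * E 2) ^ 2 := by ring
    _ = phi 1 ^ 2 + rescale (-1 : ℤ) (phi 1) ^ 2 := by
      rw [EoddNeg_sq_mul_E_two, Eodd_sq_mul_E_two]
    _ = 2 * phi 2 ^ 2 := phi_one_sq_add_rescale_sq
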